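/- Let A be a d×d Hermitian complex matrix with positive part A₊, and let B be any d×d positive semidefinite matrix. Then ‖A₊ − B‖ ≤ ‖A − B‖. -/

import Mathlib

open Matrix
open scoped ComplexOrder

/-- Frobenius norm of a complex matrix. -/
noncomputable def frob {d : ℕ} (A : Matrix (Fin d) (Fin d) ℂ) : ℝ :=
  Real.sqrt ((Aᴴ * A).trace).re

/-- Positive part A₊ = Σ_{λⱼ>0} λⱼ vⱼvⱼ† of a Hermitian matrix. -/
noncomputable def hermPosPart {d : ℕ} {A : Matrix (Fin d) (Fin d) ℂ}
    (hA : A.IsHermitian) : Matrix (Fin d) (Fin d) ℂ :=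
  (hA.eigenvectorUnitary : Matrix (Fin d) (Fin d) ℂ) *
    Matrix.diagonal (fun j => ((max (hA.eigenvalues j) 0 : ℝ) : ℂ)) *
    (hA.eigenvectorUnitary : Matrix (Fin d) (Fin d) ℂ)ᴴ

/-!
Conjugating by the eigenvector unitary of `A` preserves the Frobenius norm and keeps `B` positive
semidefinite, so we may assume `A` diagonal, with `A₊` its diagonal clamped at `0`. The two
differences then agree off the diagonal, and on it `x ↦ max x 0` is the projection onto `[0, ∞)`,
which is `1`-Lipschitz and fixes the nonnegative diagonal entries of `B`.
-/

lemma re_trace_conjTranspose_mul_self {m n : Type*} [Fintype m] [Fintype n]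
    (M : Matrix m n ℂ) : ((Mᴴ * M).trace).re = ∑ i, ∑ j, Complex.normSq (M j i) := by
  simp only [trace, diag, mul_apply, conjTranspose_apply, Complex.re_sum, RCLike.star_def,
    Complex.normSq_apply, Complex.mul_re, Complex.conj_re, Complex.conj_im]
  ring_nf

lemma frob_le_frob_of_normSq_le {d : ℕ} {M N : Matrix (Fin d) (Fin d) ℂ}
    (h : ∀ i j, Complex.normSq (M i j) ≤ Complex.normSq (N i j)) : frob M ≤ frob N := by
  refine Real.sqrt_le_sqrt ?_
  rw [re_trace_conjTranspose_mul_self, re_trace_conjTranspose_mul_self]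
  gcongr with i _ j _
  exact h j i

lemma frob_unitary_conj {d : ℕ} {U : Matrix (Fin d) (Fin d) ℂ}
    (hU : U ∈ unitaryGroup (Fin d) ℂ) (M : Matrix (Fin d) (Fin d) ℂ) :
    frob (U * M * Uᴴ) = frob M := by
  have hUU : Uᴴ * U = 1 := mem_unitaryGroup_iff'.mp hU
  have hconj : (U * M * Uᴴ)ᴴ * (U * M * Uᴴ) = U * (Mᴴ * M) * Uᴴ := by
    simp only [conjTranspose_mul, conjTranspose_conjTranspose, Matrix.mul_assoc]
    rw [← Matrix.mul_assoc Uᴴ U, hUU, Matrix.one_mul]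
  rw [frob, frob, hconj, trace_mul_cycle, ← Matrix.mul_assoc, hUU, Matrix.one_mul]

lemma unitary_conj_sub {n R : Type*} [Fintype n] [DecidableEq n] [CommRing R] [StarRing R]
    {U : Matrix n n R} (hU : U ∈ unitaryGroup n R) (X B : Matrix n n R) :
    U * X * Uᴴ - B = U * (X - Uᴴ * B * U) * Uᴴ := by
  have hUU : U * Uᴴ = 1 := mem_unitaryGroup_iff.mp hU
  rw [Matrix.mul_sub, Matrix.sub_mul]
  congr 1
  simp only [← Matrix.mul_assoc, hUU, Matrix.one_mul]
  rw [Matrix.mul_assoc, hUU, Matrix.mul_one]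

lemma normSq_max_zero_sub_le {c : ℂ} (hc : 0 ≤ c) (l : ℝ) :
    Complex.normSq ((max l 0 : ℝ) - c) ≤ Complex.normSq ((l : ℂ) - c) := by
  obtain ⟨r, hr, rfl⟩ := RCLike.nonneg_iff_exists_ofReal.mp hc
  have hproj : |max l 0 - max r 0| ≤ |l - r| := abs_max_sub_max_le_abs l r 0
  rw [max_eq_left hr] at hproj
  simpa only [RCLike.ofReal_eq_complex_ofReal, ← Complex.ofReal_sub, Complex.normSq_ofReal, ← sq,
    sq_le_sq] using hproj

lemma frob_diagonal_posPart_sub_le {d : ℕ} (l : Fin d → ℝ) {C : Matrix (Fin d) (Fin d) ℂ}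
    (hC : C.PosSemidef) :
    frob (diagonal (fun j => ((max (l j) 0 : ℝ) : ℂ)) - C) ≤
      frob (diagonal (fun j => (l j : ℂ)) - C) := by
  refine frob_le_frob_of_normSq_le fun i j => ?_
  rcases eq_or_ne i j with rfl | hij
  · simpa only [Matrix.sub_apply, diagonal_apply_eq] using
      normSq_max_zero_sub_le (hC.diag_nonneg (i := i)) (l i)
  · simp only [Matrix.sub_apply, diagonal_apply_ne _ hij, le_refl]

/-- for Hermitian A and positive semidefinite B,
‖A₊ − B‖ ≤ ‖A − B‖ in Frobenius norm. -/
theorem posPart_closer_to_psd {d : ℕ}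
    (A : Matrix (Fin d) (Fin d) ℂ) (hA : A.IsHermitian)
    (B : Matrix (Fin d) (Fin d) ℂ) (hB : B.PosSemidef) :
    frob (hermPosPart hA - B) ≤ frob (A - B) := by
  set U : Matrix (Fin d) (Fin d) ℂ := (hA.eigenvectorUnitary : Matrix (Fin d) (Fin d) ℂ)
  have hU : U ∈ unitaryGroup (Fin d) ℂ := hA.eigenvectorUnitary.2
  have hA_spectral : A = U * diagonal (fun j => (hA.eigenvalues j : ℂ)) * Uᴴ := hA.spectral_theorem
  conv_rhs => rw [hA_spectral]
  rw [hermPosPart, unitary_conj_sub hU, unitary_conj_sub hU, frob_unitary_conj hU,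
    frob_unitary_conj hU]
  exact frob_diagonal_posPart_sub_le _ (hB.conjTranspose_mul_mul_same U)
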